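/- Let f : [0,1) → [0,1) be a piecewise increasing contraction with singular set S, such that f has no left periodic singular point (i.e., there is no x ∈ S ∪ {1} and n ≥ 1 with lim_{y→x⁻} fⁿ(y) = x). If Q = ⋃_{n≥0} f^{-n}(S) is finite, then f is asymptotically periodic: for every x ∈ [0,1), ω(f,x) is a periodic orbit, and f has only finitely many periodic orbits. -/

import Mathlib

/-- The ω-limit set of `x` under iteration of `f`: the cluster points of the orbit. -/
def omegaSet (f : ℝ → ℝ) (x : ℝ) : Set ℝ :=
  {y | MapClusterPt y Filter.atTop fun n => f^[n] x}

/-!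
The finite set `Q` of points whose orbit meets `S` cuts `[0,1)` into finitely many gaps. Since
`f⁻¹(Q) ∩ [0,1) ⊆ Q`, the map `f` sends each gap continuously, increasingly and `λ`-contractingly
into a single gap. An orbit that is not eventually periodic leaves `Q` and then visits some gap
twice, `d` steps apart; so `f^[d]` maps that gap into itself and the `f^[d]`-orbit converges to a
point `y` of its closure. If `y` is the right end of the gap, approached from the left, then `y`,
or the singular point that the orbit of `y` first meets, is a left periodic singular point.
Otherwise no point of `Q` separates `y` from the orbit, so the contraction estimates pass to the
limit: `y` is `d`-periodic and the orbit of `x` is asymptotic to that of `y`. By contraction a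
gap contains at most one periodic point, which bounds the number of periodic orbits.
-/

open Set Filter Topology Function

theorem omegaSet_iterate (f : ℝ → ℝ) (x : ℝ) (n : ℕ) : omegaSet f (f^[n] x) = omegaSet f x := by
  ext c
  have hshift : (fun k => f^[k] (f^[n] x)) = (fun k => f^[k] x) ∘ (· + n) :=
    funext fun k => (iterate_add_apply f k n x).symm
  simp only [omegaSet, mem_ofPred_eq, hshift, mapClusterPt_comp, map_add_atTop_eq_nat]

theorem omegaSet_eq_range_of_tendsto_dist {f : ℝ → ℝ} {x y : ℝ} {d : ℕ} (hd : 0 < d)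
    (hy : IsPeriodicPt f d y) (h : Tendsto (fun i => dist (f^[i] x) (f^[i] y)) atTop (𝓝 0)) :
    omegaSet f x = range fun n => f^[n] y := by
  have hfin : (range fun n => f^[n] y).Finite :=
    ((finite_Iio d).image fun n => f^[n] y).subset <| by
      rintro _ ⟨n, rfl⟩
      exact ⟨n % d, Nat.mod_lt n hd, hy.iterate_mod_apply n⟩
  apply Subset.antisymm
  · intro c hc
    rw [← hfin.isClosed.closure_eq, Metric.closure_eq_iInter_cthickening]
    refine mem_iInter₂.2 fun ε hε => Metric.isClosed_cthickening.mem_of_mapClusterPt hc ?_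
    filter_upwards [h.eventually (ge_mem_nhds hε)] with i hi
    exact Metric.mem_cthickening_of_dist_le _ _ _ _ ⟨i, rfl⟩ hi
  · rintro _ ⟨i, rfl⟩
    have hφ : StrictMono fun j => i + d * j := fun a b hab => by
      simpa using Nat.mul_lt_mul_of_pos_left hab hd
    refine MapClusterPt.of_comp hφ.tendsto_atTop (Tendsto.mapClusterPt ?_)
    rw [tendsto_iff_dist_tendsto_zero]
    refine (h.comp hφ.tendsto_atTop).congr fun j => ?_
    show dist (f^[i + d * j] x) (f^[i + d * j] y) = dist (f^[i + d * j] x) (f^[i] y)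
    rw [iterate_add_apply f i (d * j) y, (hy.mul_const j).eq]

section LowerSets

/- For `u, v ∉ T`, the equation `T ∩ Iio u = T ∩ Iio v` says that `u` and `v` lie in the same
component of `Tᶜ`; unlike `Disjoint T (uIoo u v)` it is visibly transitive. -/

variable {α : Type*} [LinearOrder α] {T : Set α}

theorem disjoint_uIoo_of_inter_Iio_eq {u v : α} (h : T ∩ Iio u = T ∩ Iio v) :
    Disjoint T (uIoo u v) := by
  refine disjoint_left.2 fun t ht htuv => ?_
  rcases lt_or_ge u v with huv | hvu
  · rw [uIoo_of_lt huv] at htuv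
    exact (h ▸ ⟨ht, htuv.2⟩ : t ∈ T ∩ Iio u).2.not_gt htuv.1
  · rw [uIoo_of_ge hvu] at htuv
    exact (h.symm ▸ ⟨ht, htuv.2⟩ : t ∈ T ∩ Iio v).2.not_gt htuv.1

theorem inter_Iio_eq_of_disjoint_Ioo {u v : α} (huv : u ≤ v) (hu : u ∉ T)
    (h : Disjoint T (Ioo u v)) : T ∩ Iio u = T ∩ Iio v := by
  ext t
  refine ⟨fun ⟨ht, htu⟩ => ⟨ht, htu.trans_le huv⟩, fun ⟨ht, htv⟩ => ⟨ht, ?_⟩⟩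
  refine lt_of_not_ge fun hut => ?_
  rcases hut.lt_or_eq with hut | rfl
  · exact disjoint_left.1 h ht ⟨hut, htv⟩
  · exact hu ht

theorem max_notMem_or_forall_lt {s : ℕ → α} {y b : α} (hsb : ∀ j, s j < b) (hsT : ∀ j, s j ∉ T)
    (hL : ∀ i j, T ∩ Iio (s i) = T ∩ Iio (s j)) (hyb : y ≤ b) :
    (y < b ∧ ∀ j, max (s j) y ∉ T) ∨ ((y ∈ T ∨ y = b) ∧ ∀ j, s j < y) := by
  by_cases hyT : y ∈ T ∨ y = b
  · by_cases hsy : ∀ j, s j < y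
    · exact Or.inr ⟨hyT, hsy⟩
    obtain ⟨j₀, hj₀⟩ := not_forall.1 hsy
    have hyj₀ : y < s j₀ := (not_lt.1 hj₀).lt_of_ne fun h =>
      hyT.elim (fun hy => hsT j₀ (h ▸ hy)) fun hy => (hsb j₀).ne (h ▸ hy)
    have hyT' : y ∈ T := hyT.resolve_right (hyj₀.trans (hsb j₀)).ne
    have hys (j : ℕ) : y < s j := (hL j₀ j ▸ ⟨hyT', hyj₀⟩ : y ∈ T ∩ Iio (s j)).2
    exact Or.inl ⟨hyj₀.trans (hsb j₀), fun j => (max_eq_left (hys j).le).symm ▸ hsT j⟩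
  · obtain ⟨hyT, hyb'⟩ := not_or.1 hyT
    refine Or.inl ⟨hyb.lt_of_ne hyb', fun j => ?_⟩
    rcases max_choice (s j) y with h | h <;> rw [h]
    exacts [hsT j, hyT]

variable [TopologicalSpace α] [OrderTopology α]

theorem disjoint_uIoo_of_tendsto {s : ℕ → α} {y : α} (hs : Tendsto s atTop (𝓝 y))
    (hL : ∀ i j, T ∩ Iio (s i) = T ∩ Iio (s j)) (j : ℕ) : Disjoint T (uIoo (s j) y) := by
  refine disjoint_left.2 fun t ht htj => ?_
  rcases lt_or_ge (s j) y with hjy | hyj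
  · rw [uIoo_of_lt hjy] at htj
    obtain ⟨i, hi⟩ := (hs.eventually (lt_mem_nhds htj.2)).exists
    exact (hL i j ▸ ⟨ht, hi⟩ : t ∈ T ∩ Iio (s j)).2.not_gt htj.1
  · rw [uIoo_of_ge hyj] at htj
    obtain ⟨i, hi⟩ := (hs.eventually (gt_mem_nhds htj.1)).exists
    exact (hL j i ▸ ⟨ht, htj.2⟩ : t ∈ T ∩ Iio (s i)).2.not_gt hi

end LowerSets

structure IsPiecewiseContraction (f : ℝ → ℝ) (S : Set ℝ) (lam : ℝ) : Prop where
  lam_pos : 0 < lam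
  lam_lt_one : lam < 1
  mapsTo : MapsTo f (Ico 0 1) (Ico 0 1)
  piece : ∀ x ∈ Ico (0:ℝ) 1, ∀ y ∈ Ico (0:ℝ) 1, x < y →
    (∀ s ∈ S, s ∉ Ioc x y) → f x < f y ∧ f y - f x ≤ lam * (y - x)

def singularPreimages (f : ℝ → ℝ) (S : Set ℝ) : Set ℝ :=
  {x | x ∈ Ico (0:ℝ) 1 ∧ ∃ n : ℕ, f^[n] x ∈ S}

def IsLeftPeriodicSingularPoint (f : ℝ → ℝ) (S : Set ℝ) (c : ℝ) : Prop :=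
  ((c ∈ S ∧ c ≠ 0) ∨ c = 1) ∧ ∃ n, 1 ≤ n ∧ Tendsto f^[n] (𝓝[<] c) (𝓝 c)

section Dynamics

variable {f : ℝ → ℝ} {S : Set ℝ} {lam : ℝ} {u v : ℝ}

local notation "Q" => singularPreimages f S

theorem mem_singularPreimages_of_mem {s : ℝ} (hs : s ∈ S) (hs' : s ∈ Ico (0:ℝ) 1) : s ∈ Q :=
  ⟨hs', 0, hs⟩

theorem mem_singularPreimages_of_apply_mem {x : ℝ} (hx : x ∈ Ico (0:ℝ) 1) (h : f x ∈ Q) :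
    x ∈ Q :=
  let ⟨_, n, hn⟩ := h
  ⟨hx, n + 1, by rwa [iterate_succ_apply]⟩

namespace IsPiecewiseContraction

theorem iterate_notMem_singularPreimages (hf : IsPiecewiseContraction f S lam) {x : ℝ}
    (hx : x ∈ Ico (0:ℝ) 1) (hxQ : x ∉ Q) (n : ℕ) : f^[n] x ∉ Q := by
  induction n with
  | zero => exact hxQ
  | succ n ih =>
    rw [iterate_succ_apply']
    exact fun h => ih (mem_singularPreimages_of_apply_mem (hf.mapsTo.iterate n hx) h)

theorem lipschitzOnWith (hf : IsPiecewiseContraction f S lam) (hu : 0 ≤ u) (hv : v < 1)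
    (hS : ∀ s ∈ S, s ∉ Ioc u v) : LipschitzOnWith (Real.toNNReal lam) f (Icc u v) := by
  have hI : Icc u v ⊆ Ico 0 1 := Icc_subset_Ico hu hv
  have key : ∀ a ∈ Icc u v, ∀ b ∈ Icc u v, a < b → dist (f a) (f b) ≤ lam * dist a b := by
    intro a ha b hb hab
    obtain ⟨hlt, hle⟩ := hf.piece a (hI ha) b (hI hb) hab
      fun s hs hsab => hS s hs ⟨ha.1.trans_lt hsab.1, hsab.2.trans hb.2⟩
    rwa [dist_comm, Real.dist_eq, abs_of_pos (sub_pos.2 hlt), dist_comm, Real.dist_eq,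
      abs_of_pos (sub_pos.2 hab)]
  rw [lipschitzOnWith_iff_dist_le_mul, Real.coe_toNNReal _ hf.lam_pos.le]
  intro a ha b hb
  rcases lt_trichotomy a b with hab | rfl | hab
  · exact key a ha b hb hab
  · simp
  · rw [dist_comm, dist_comm a]
    exact key b hb a ha hab

theorem apply_gap (hf : IsPiecewiseContraction f S lam) (hu : u ∈ Ico (0:ℝ) 1)
    (hv : v ∈ Ico (0:ℝ) 1) (huv : u < v) (hgap : Disjoint Q (Ioo u v)) (hvS : v ∉ S) :
    f u < f v ∧ f v - f u ≤ lam * (v - u) ∧ Disjoint Q (Ioo (f u) (f v)) := by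
  have hI : Icc u v ⊆ Ico 0 1 := Icc_subset_Ico hu.1 hv.2
  have hS : ∀ s ∈ S, s ∉ Ioc u v := by
    rintro s hs ⟨hus, hsv⟩
    rcases hsv.lt_or_eq with hsv | rfl
    · exact disjoint_left.1 hgap (mem_singularPreimages_of_mem hs (hI ⟨hus.le, hsv.le⟩))
        ⟨hus, hsv⟩
    · exact hvS hs
  obtain ⟨hlt, hle⟩ := hf.piece u hu v hv huv hS
  refine ⟨hlt, hle, disjoint_left.2 fun q hq hquv => ?_⟩
  obtain ⟨t, ht, rfl⟩ :=
    intermediate_value_Ioo huv.le (hf.lipschitzOnWith hu.1 hv.2 hS).continuousOn hquv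
  exact disjoint_left.1 hgap
    (mem_singularPreimages_of_apply_mem (hI (Ioo_subset_Icc_self ht)) hq) ht

theorem iterate_gap (hf : IsPiecewiseContraction f S lam) (hu : u ∈ Ico (0:ℝ) 1)
    (hv : v ∈ Ico (0:ℝ) 1) (huv : u < v) (hgap : Disjoint Q (Ioo u v)) {k : ℕ}
    (hvS : ∀ j < k, f^[j] v ∉ S) :
    f^[k] u < f^[k] v ∧ f^[k] v - f^[k] u ≤ lam ^ k * (v - u) ∧
      Disjoint Q (Ioo (f^[k] u) (f^[k] v)) := by
  induction k with
  | zero => simpa using ⟨huv, hgap⟩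
  | succ k ih =>
    obtain ⟨hlt, hle, hdisj⟩ := ih fun j hj => hvS j (by omega)
    obtain ⟨hlt', hle', hdisj'⟩ := hf.apply_gap (hf.mapsTo.iterate k hu)
      (hf.mapsTo.iterate k hv) hlt hdisj (hvS k k.lt_succ_self)
    simp only [iterate_succ_apply']
    refine ⟨hlt', hle'.trans ?_, hdisj'⟩
    calc lam * (f^[k] v - f^[k] u) ≤ lam * (lam ^ k * (v - u)) := by
          gcongr; exact hf.lam_pos.le
      _ = lam ^ (k + 1) * (v - u) := by ring

theorem iterate_notMem_of_notMem_singularPreimages (hf : IsPiecewiseContraction f S lam)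
    (hv : v ∈ Ico (0:ℝ) 1) (hvQ : v ∉ Q) (j : ℕ) : f^[j] v ∉ S := fun h =>
  hf.iterate_notMem_singularPreimages hv hvQ j
    (mem_singularPreimages_of_mem h (hf.mapsTo.iterate j hv))

theorem iterate_lt_iterate (hf : IsPiecewiseContraction f S lam) (hu : u ∈ Ico (0:ℝ) 1)
    (hv : v ∈ Ico (0:ℝ) 1) (huv : u < v) (hgap : Disjoint Q (Ioo u v)) (hvQ : v ∉ Q) (k : ℕ) :
    f^[k] u < f^[k] v :=
  (hf.iterate_gap hu hv huv hgap fun j _ =>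
    hf.iterate_notMem_of_notMem_singularPreimages hv hvQ j).1

theorem abs_iterate_sub_le (hf : IsPiecewiseContraction f S lam) (hu : u ∈ Ico (0:ℝ) 1)
    (hv : v ∈ Ico (0:ℝ) 1) (hgap : Disjoint Q (uIoo u v)) (hmax : max u v ∉ Q) (k : ℕ) :
    |f^[k] u - f^[k] v| ≤ lam ^ k * |u - v| := by
  rcases lt_trichotomy u v with huv | rfl | hvu
  · rw [uIoo_of_lt huv] at hgap
    rw [max_eq_right huv.le] at hmax
    obtain ⟨hlt, hle, -⟩ := hf.iterate_gap hu hv huv hgap fun j _ =>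
      hf.iterate_notMem_of_notMem_singularPreimages hv hmax j
    rwa [abs_sub_comm, abs_of_pos (sub_pos.2 hlt), abs_sub_comm, abs_of_pos (sub_pos.2 huv)]
  · simp
  · rw [uIoo_of_gt hvu] at hgap
    rw [max_eq_left hvu.le] at hmax
    obtain ⟨hlt, hle, -⟩ := hf.iterate_gap hv hu hvu hgap fun j _ =>
      hf.iterate_notMem_of_notMem_singularPreimages hu hmax j
    rwa [abs_of_pos (sub_pos.2 hlt), abs_of_pos (sub_pos.2 hvu)]

theorem iterate_inter_Iio_eq (hf : IsPiecewiseContraction f S lam) (hu : u ∈ Ico (0:ℝ) 1)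
    (hv : v ∈ Ico (0:ℝ) 1) (huQ : u ∉ Q) (hvQ : v ∉ Q) (h : Q ∩ Iio u = Q ∩ Iio v) (k : ℕ) :
    Q ∩ Iio (f^[k] u) = Q ∩ Iio (f^[k] v) := by
  wlog huv : u < v generalizing u v
  · rcases (not_lt.1 huv).lt_or_eq with hvu | rfl
    · exact (this hv hu hvQ huQ h.symm hvu).symm
    · rfl
  have hgap : Disjoint Q (Ioo u v) := uIoo_of_lt huv ▸ disjoint_uIoo_of_inter_Iio_eq h
  obtain ⟨hlt, -, hdisj⟩ := hf.iterate_gap hu hv huv hgap fun j _ =>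
    hf.iterate_notMem_of_notMem_singularPreimages hv hvQ j
  exact inter_Iio_eq_of_disjoint_Ioo hlt.le (hf.iterate_notMem_singularPreimages hu huQ k) hdisj

theorem tendsto_iterate_nhdsLT (hf : IsPiecewiseContraction f S lam) {c : ℝ} (hc : c ≤ 1)
    {d : ℕ} {v : ℕ → ℝ} (hvI : ∀ k, v k ∈ Ico (0:ℝ) 1) (hvQ : ∀ k, v k ∉ Q)
    (hvc : ∀ k, v k < c) (hgap : ∀ k, Disjoint Q (Ioo (v k) c))
    (hlim : Tendsto v atTop (𝓝 c)) (hstep : ∀ k, f^[d] (v k) = v (k + 1)) :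
    Tendsto f^[d] (𝓝[<] c) (𝓝 c) := by
  have hzI : ∀ k, ∀ z ∈ Ioo (v k) c, z ∈ Ico (0:ℝ) 1 := fun k z hz =>
    ⟨(hvI k).1.trans hz.1.le, hz.2.trans_le hc⟩
  refine tendsto_order.2 ⟨fun a ha => ?_, fun a ha => ?_⟩
  · obtain ⟨K, hK⟩ := (hlim.eventually (lt_mem_nhds ha)).exists_forall_of_atTop
    filter_upwards [Ioo_mem_nhdsLT (hvc K)] with z hz
    have hmono := hf.iterate_lt_iterate (hvI K) (hzI K z hz) hz.1
      ((hgap K).mono_right (Ioo_subset_Ioo_right hz.2.le))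
      (fun hzQ => disjoint_left.1 (hgap K) hzQ hz) d
    exact (hK (K + 1) K.le_succ).trans (hstep K ▸ hmono)
  · filter_upwards [Ioo_mem_nhdsLT (hvc 0)] with z hz
    obtain ⟨k, hk⟩ := (hlim.eventually (lt_mem_nhds hz.2)).exists
    have hmono := hf.iterate_lt_iterate (hzI 0 z hz) (hvI k) hk
      ((hgap 0).mono_right (Ioo_subset_Ioo hz.1.le (hvc k).le)) (hvQ k) d
    exact (hstep k ▸ hmono).trans ((hvc (k + 1)).trans ha)

theorem exists_isLeftPeriodicSingularPoint (hf : IsPiecewiseContraction f S lam) {d : ℕ}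
    (hd : 1 ≤ d) {s : ℕ → ℝ} {y : ℝ} (hsI : ∀ j, s j ∈ Ico (0:ℝ) 1) (hsQ : ∀ j, s j ∉ Q)
    (hsy : ∀ j, s j < y) (hgap : ∀ j, Disjoint Q (Ioo (s j) y))
    (hlim : Tendsto s atTop (𝓝 y)) (hstep : ∀ j, f^[d] (s j) = s (j + 1))
    (hy : y ∈ Q ∨ y = 1) : ∃ c, IsLeftPeriodicSingularPoint f S c := by
  classical
  rcases hy with ⟨hyI, hyS⟩ | rfl
  · -- `f^[m]` carries the approach `s → y` to an approach from the left of a singular point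
    set m := Nat.find hyS
    have hpair (j : ℕ) := hf.iterate_gap (hsI j) hyI (hsy j) (hgap j) (k := m)
      fun i hi => Nat.find_min hyS hi
    have hlim' : Tendsto (fun j => f^[m] (s j)) atTop (𝓝 (f^[m] y)) := by
      have hlow : Tendsto (fun j => f^[m] y - lam ^ m * (y - s j)) atTop (𝓝 (f^[m] y)) := by
        simpa using (tendsto_const_nhds (x := f^[m] y)).sub
          ((tendsto_const_nhds (x := lam ^ m)).mul ((tendsto_const_nhds (x := y)).sub hlim))
      refine tendsto_of_tendsto_of_tendsto_of_le_of_le hlow tendsto_const_nhds (fun j => ?_)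
        fun j => (hpair j).1.le
      linarith [(hpair j).2.1]
    refine ⟨f^[m] y, Or.inl ⟨Nat.find_spec hyS, ?_⟩, d, hd,
      hf.tendsto_iterate_nhdsLT (hf.mapsTo.iterate m hyI).2.le
        (fun j => hf.mapsTo.iterate m (hsI j))
        (fun j => hf.iterate_notMem_singularPreimages (hsI j) (hsQ j) m)
        (fun j => (hpair j).1) (fun j => (hpair j).2.2) hlim' fun j => ?_⟩
    · exact ((hf.mapsTo.iterate m (hsI 0)).1.trans_lt (hpair 0).1).ne'
    · rw [← iterate_add_apply, add_comm, iterate_add_apply, hstep]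
  · exact ⟨1, Or.inr rfl, d, hd, hf.tendsto_iterate_nhdsLT le_rfl hsI hsQ hsy hgap hlim hstep⟩

theorem inter_Iio_iterate_eq (hf : IsPiecewiseContraction f S lam) {z : ℝ}
    (hz : z ∈ Ico (0:ℝ) 1) (hzQ : z ∉ Q) {d : ℕ} (hgap : Q ∩ Iio (f^[d] z) = Q ∩ Iio z)
    (j : ℕ) : Q ∩ Iio ((f^[d])^[j] z) = Q ∩ Iio z := by
  induction j with
  | zero => rfl
  | succ j ih =>
    rw [iterate_succ_apply, ← iterate_mul, hf.iterate_inter_Iio_eq (hf.mapsTo.iterate d hz) hz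
      (hf.iterate_notMem_singularPreimages hz hzQ d) hzQ hgap, iterate_mul, ih]

theorem cauchySeq_iterate (hf : IsPiecewiseContraction f S lam) {z : ℝ}
    (hz : z ∈ Ico (0:ℝ) 1) (hzQ : z ∉ Q) {d : ℕ} (hd : 0 < d)
    (hgap : Q ∩ Iio (f^[d] z) = Q ∩ Iio z) : CauchySeq fun j => (f^[d])^[j] z := by
  refine cauchySeq_of_le_geometric (lam ^ d) |z - f^[d] z|
    (pow_lt_one₀ hf.lam_pos.le hf.lam_lt_one hd.ne') fun j => ?_
  rw [Real.dist_eq, iterate_succ_apply, ← iterate_mul, ← pow_mul, mul_comm |z - f^[d] z|]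
  exact hf.abs_iterate_sub_le hz (hf.mapsTo.iterate d hz)
    (disjoint_uIoo_of_inter_Iio_eq hgap.symm)
    (max_rec' (· ∉ Q) hzQ (hf.iterate_notMem_singularPreimages hz hzQ d)) (d * j)

theorem exists_isPeriodicPt_tendsto_dist (hf : IsPiecewiseContraction f S lam)
    (hnolps : ∀ c, ¬ IsLeftPeriodicSingularPoint f S c) {z : ℝ} (hz : z ∈ Ico (0:ℝ) 1)
    (hzQ : z ∉ Q) {d : ℕ} (hd : 0 < d) (hgap : Q ∩ Iio (f^[d] z) = Q ∩ Iio z) :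
    ∃ y ∈ Ico (0:ℝ) 1, IsPeriodicPt f d y ∧
      Tendsto (fun i => dist (f^[i] z) (f^[i] y)) atTop (𝓝 0) := by
  set s : ℕ → ℝ := fun j => (f^[d])^[j] z
  have hsI (j : ℕ) : s j ∈ Ico (0:ℝ) 1 := (hf.mapsTo.iterate d).iterate j hz
  have hsQ (j : ℕ) : s j ∉ Q := by
    simpa only [s, ← iterate_mul] using hf.iterate_notMem_singularPreimages hz hzQ (d * j)
  have hL (i j : ℕ) : Q ∩ Iio (s i) = Q ∩ Iio (s j) :=
    (hf.inter_Iio_iterate_eq hz hzQ hgap i).trans (hf.inter_Iio_iterate_eq hz hzQ hgap j).symm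
  have hstep (j : ℕ) : f^[d] (s j) = s (j + 1) := (iterate_succ_apply' _ _ _).symm
  obtain ⟨y, hlim⟩ := cauchySeq_tendsto_of_complete (hf.cauchySeq_iterate hz hzQ hd hgap)
  have hy0 : 0 ≤ y := ge_of_tendsto' hlim fun j => (hsI j).1
  rcases max_notMem_or_forall_lt (fun j => (hsI j).2) hsQ hL
      (le_of_tendsto' hlim fun j => (hsI j).2.le) with ⟨hy1, hmax⟩ | ⟨hyQ, hsy⟩
  · have hlip (i j : ℕ) : dist (f^[i] (s j)) (f^[i] y) ≤ lam ^ i * dist (s j) y :=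
      hf.abs_iterate_sub_le (hsI j) ⟨hy0, hy1⟩ (disjoint_uIoo_of_tendsto hlim hL j) (hmax j) i
    have hdist (i : ℕ) : Tendsto (fun j => dist (f^[i] (s j)) (f^[i] y)) atTop (𝓝 0) :=
      squeeze_zero (fun _ => dist_nonneg) (hlip i)
        (by simpa using (tendsto_iff_dist_tendsto_zero.1 hlim).const_mul (lam ^ i))
    refine ⟨y, ⟨hy0, hy1⟩, ?_, ?_⟩
    · refine tendsto_nhds_unique (tendsto_iff_dist_tendsto_zero.2 (hdist d)) ?_
      exact (hlim.comp (tendsto_add_atTop_nat 1)).congr fun j => (hstep j).symm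
    · refine squeeze_zero (fun _ => dist_nonneg) (fun i => hlip i 0) ?_
      have := (tendsto_pow_atTop_nhds_zero_of_lt_one hf.lam_pos.le hf.lam_lt_one).mul_const
        (dist z y)
      rwa [zero_mul] at this
  · obtain ⟨c, hc⟩ := hf.exists_isLeftPeriodicSingularPoint hd hsI hsQ hsy
      (fun j => uIoo_of_lt (hsy j) ▸ disjoint_uIoo_of_tendsto hlim hL j) hlim hstep hyQ
    exact absurd hc (hnolps c)

theorem exists_omegaSet_eq_range (hf : IsPiecewiseContraction f S lam)
    (hnolps : ∀ c, ¬ IsLeftPeriodicSingularPoint f S c) (hQ : (Q).Finite) {x : ℝ}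
    (hx : x ∈ Ico (0:ℝ) 1) :
    ∃ y ∈ Ico (0:ℝ) 1, (∃ p, 1 ≤ p ∧ f^[p] y = y) ∧ omegaSet f x = range fun n => f^[n] y := by
  by_cases hrep : ∃ a b, a < b ∧ f^[a] x = f^[b] x
  · obtain ⟨a, b, hab, heq⟩ := hrep
    have hper : IsPeriodicPt f (b - a) (f^[a] x) := by
      rw [IsPeriodicPt, IsFixedPt, ← iterate_add_apply, Nat.sub_add_cancel hab.le, heq]
    refine ⟨f^[a] x, hf.mapsTo.iterate a hx, ⟨b - a, by omega, hper⟩, ?_⟩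
    rw [← omegaSet_iterate f x a]
    exact omegaSet_eq_range_of_tendsto_dist (by omega) hper (by simp)
  -- the orbit is infinite, so it leaves the finite set `Q` and then visits some gap twice
  obtain ⟨n, hn⟩ : ∃ n, f^[n] x ∉ Q := by
    by_contra! h
    exact hrep (hQ.exists_lt_map_eq_of_forall_mem h)
  obtain ⟨a, b, hab, heq⟩ := hQ.finite_subsets.exists_lt_map_eq_of_forall_mem
    (f := fun k => Q ∩ Iio (f^[k] (f^[n] x))) fun _ => inter_subset_left
  have hgap : Q ∩ Iio (f^[b - a] (f^[a] (f^[n] x))) = Q ∩ Iio (f^[a] (f^[n] x)) := by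
    rw [← iterate_add_apply, Nat.sub_add_cancel hab.le]
    exact heq.symm
  obtain ⟨y, hy, hper, hasymp⟩ := hf.exists_isPeriodicPt_tendsto_dist hnolps
    (hf.mapsTo.iterate a (hf.mapsTo.iterate n hx))
    (hf.iterate_notMem_singularPreimages (hf.mapsTo.iterate n hx) hn a) (by omega) hgap
  refine ⟨y, hy, ⟨b - a, by omega, hper⟩, ?_⟩
  rw [← omegaSet_iterate f x n, ← omegaSet_iterate f _ a]
  exact omegaSet_eq_range_of_tendsto_dist (by omega) hper hasymp

theorem eq_of_mem_periodicPts (hf : IsPiecewiseContraction f S lam) (hu : u ∈ Ico (0:ℝ) 1)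
    (hv : v ∈ Ico (0:ℝ) 1) (huQ : u ∉ Q) (hvQ : v ∉ Q) (hup : u ∈ periodicPts f)
    (hvp : v ∈ periodicPts f) (h : Q ∩ Iio u = Q ∩ Iio v) : u = v := by
  obtain ⟨p, hp, hpu⟩ := mem_periodicPts.1 hup
  obtain ⟨q, hq, hqv⟩ := mem_periodicPts.1 hvp
  have hle := hf.abs_iterate_sub_le hu hv (disjoint_uIoo_of_inter_Iio_eq h)
    (max_rec' (· ∉ Q) huQ hvQ) (p * q)
  rw [(hpu.mul_const q).eq, (hqv.const_mul p).eq] at hle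
  have hlt : lam ^ (p * q) < 1 := pow_lt_one₀ hf.lam_pos.le hf.lam_lt_one (by positivity)
  by_contra hne
  nlinarith [abs_pos.2 (sub_ne_zero.2 hne)]

theorem finite_inter_periodicPts (hf : IsPiecewiseContraction f S lam) (hQ : (Q).Finite) :
    (Ico (0:ℝ) 1 ∩ periodicPts f).Finite := by
  refine Finite.of_sdiff ?_ hQ
  refine Finite.of_finite_image (f := fun z => Q ∩ Iio z) (hQ.finite_subsets.subset ?_) ?_
  · rintro _ ⟨z, -, rfl⟩
    exact inter_subset_left
  · rintro u ⟨⟨hu, hup⟩, huQ⟩ v ⟨⟨hv, hvp⟩, hvQ⟩ h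
    exact hf.eq_of_mem_periodicPts hu hv huQ hvQ hup hvp h

end IsPiecewiseContraction

end Dynamics

theorem stmt_8_general (f : ℝ → ℝ) (S : Set ℝ) (lam : ℝ)
    (hlam0 : 0 < lam) (hlam1 : lam < 1)
    (hmap : Set.MapsTo f (Set.Ico 0 1) (Set.Ico 0 1))
    (hpiece : ∀ x ∈ Set.Ico (0:ℝ) 1, ∀ y ∈ Set.Ico (0:ℝ) 1, x < y →
      (∀ s ∈ S, s ∉ Set.Ioc x y) → f x < f y ∧ f y - f x ≤ lam * (y - x))
    (hnolps : ∀ x : ℝ, (x ∈ S ∧ x ≠ 0) ∨ x = 1 → ∀ n : ℕ, 1 ≤ n →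
      ¬ Filter.Tendsto (f^[n]) (nhdsWithin x (Set.Iio x)) (nhds x))
    (hQfin : {x | x ∈ Set.Ico (0:ℝ) 1 ∧ ∃ n : ℕ, f^[n] x ∈ S}.Finite) :
    (∀ x ∈ Set.Ico (0:ℝ) 1, ∃ y ∈ Set.Ico (0:ℝ) 1,
      (∃ p, 1 ≤ p ∧ f^[p] y = y) ∧ omegaSet f x = Set.range fun n => f^[n] y) ∧
    {O : Set ℝ | ∃ x, x ∈ Set.Ico (0:ℝ) 1 ∧ (∃ p, 1 ≤ p ∧ f^[p] x = x) ∧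
        O = Set.range fun n => f^[n] x}.Finite := by
  have hf : IsPiecewiseContraction f S lam := ⟨hlam0, hlam1, hmap, hpiece⟩
  have hQ : (singularPreimages f S).Finite := hQfin
  refine ⟨fun x hx => hf.exists_omegaSet_eq_range
    (fun c ⟨hc, n, hn, hlim⟩ => hnolps c hc n hn hlim) hQ hx, ?_⟩
  refine ((hf.finite_inter_periodicPts hQ).image fun z => range fun n => f^[n] z).subset ?_
  rintro _ ⟨x, hx, ⟨p, hp, hpx⟩, rfl⟩
  exact ⟨x, ⟨hx, mem_periodicPts.2 ⟨p, hp, hpx⟩⟩, rfl⟩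

/-- A piecewise increasing contraction with no left periodic singular
point and with `Q = ⋃_{n≥0} f^{-n}(S)` finite is asymptotically periodic: every
ω-limit set is a periodic orbit, and there are only finitely many periodic orbits. -/
theorem stmt_8 (f : ℝ → ℝ) (S : Set ℝ) (lam : ℝ)
    (hlam0 : 0 < lam) (hlam1 : lam < 1)
    (hSfin : S.Finite) (hS0 : (0:ℝ) ∈ S) (hSsub : S ⊆ Set.Ico 0 1)
    (hmap : Set.MapsTo f (Set.Ico 0 1) (Set.Ico 0 1))
    (hrc : ∀ x ∈ Set.Ico (0:ℝ) 1, ContinuousWithinAt f (Set.Ici x) x)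
    (hpiece : ∀ x ∈ Set.Ico (0:ℝ) 1, ∀ y ∈ Set.Ico (0:ℝ) 1, x < y →
      (∀ s ∈ S, s ∉ Set.Ioc x y) → f x < f y ∧ f y - f x ≤ lam * (y - x))
    (hnolps : ∀ x : ℝ, (x ∈ S ∧ x ≠ 0) ∨ x = 1 → ∀ n : ℕ, 1 ≤ n →
      ¬ Filter.Tendsto (f^[n]) (nhdsWithin x (Set.Iio x)) (nhds x))
    (hQfin : {x | x ∈ Set.Ico (0:ℝ) 1 ∧ ∃ n : ℕ, f^[n] x ∈ S}.Finite) :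
    (∀ x ∈ Set.Ico (0:ℝ) 1, ∃ y ∈ Set.Ico (0:ℝ) 1,
      (∃ p, 1 ≤ p ∧ f^[p] y = y) ∧ omegaSet f x = Set.range fun n => f^[n] y) ∧
    {O : Set ℝ | ∃ x, x ∈ Set.Ico (0:ℝ) 1 ∧ (∃ p, 1 ≤ p ∧ f^[p] x = x) ∧
        O = Set.range fun n => f^[n] x}.Finite :=
  stmt_8_general f S lam hlam0 hlam1 hmap hpiece hnolps hQfin
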